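/- Let (W,S) be a finite Coxeter system, Γ a totally ordered abelian group, and L : W → Γ a weight function with L(s) ≥ 0 for all s ∈ S. Let ã : Irr(W) → Γ be the function defined recursively as in Definition 2. Then for every E ∈ Irr(W): (i) ã_E ≥ ã'_E ≥ 0; (ii) ã_{E ⊗ sgn} − ã_E = ω_L(E); and (iii) ã_E ≥ ã_M whenever J ⊊ S, M ∈ Irr(W_J) and M ↑ E. -/

import Mathlib

/-!
The recursion says `ã_E = max (ã'_E) (ã'_{E ⊗ sgn} − ω_L(E))`. Since
`ω_L(E ⊗ sgn) = −ω_L(E)`, also `ã_{E ⊗ sgn} = max (ã'_{E ⊗ sgn}) (ã'_E + ω_L(E)) = ã_E + ω_L(E)`,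
which gives (ii) and `ã_E ≥ ã'_E`; (iii) is then the maximality of `ã'_E`, and `ã'_E ≥ 0`
because the trivial character of `W_∅` induces the regular representation, which contains
every `E`.

The real input is that `ω_L(E)` exists at all, i.e. that `N_s χ(s) / χ(1)` is an integer for a
simple reflection `s`. By Schur's lemma the class sum of `s` acts on `E` by this scalar; the
scalar is an algebraic integer (an eigenvalue of an integer matrix acting on matrix
coefficients) and is rational since `χ(s)` is an integer for an involution `s`.
-/

open scoped Classical

/-- The standard parabolic subgroup `W_I` of a Coxeter system. -/
def CoxeterSystem.parabolic {B W : Type*} [Group W] {M : CoxeterMatrix B}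
    (cs : CoxeterSystem M W) (I : Set B) : Subgroup W :=
  Subgroup.closure (cs.simple '' I)

/-- A complex representation is irreducible: the space is nonzero and the only invariant
subspaces are `⊥` and `⊤`. -/
def IrreducibleRep {G : Type*} [Group G] {V : Type*} [AddCommGroup V] [Module ℂ V]
    (ρ : Representation ℂ G V) : Prop :=
  (∃ v : V, v ≠ 0) ∧
  ∀ U : Submodule ℂ V, (∀ g : G, ∀ v ∈ U, ρ g v ∈ U) → U = ⊥ ∨ U = ⊤

/-- `χ : W → ℂ` is the character of an irreducible complex representation of the parabolic
subgroup `W_I` (extended by `0` outside `W_I`). -/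
def CoxeterSystem.IsIrrCharOf {B W : Type*} [Group W] {M : CoxeterMatrix B}
    (cs : CoxeterSystem M W) (I : Set B) (χ : W → ℂ) : Prop :=
  ∃ (n : ℕ) (ρ : Representation ℂ (cs.parabolic I) (Fin n → ℂ)),
    IrreducibleRep ρ ∧
    ∀ w : W, χ w =
      if h : w ∈ cs.parabolic I then LinearMap.trace ℂ (Fin n → ℂ) (ρ ⟨w, h⟩) else 0

/-- The character of `E ⊗ sgn`, where `sgn` is the sign character `w ↦ (−1)^{ℓ(w)}`
(on a standard parabolic subgroup, the sign character is the restriction of that of `W`). -/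
noncomputable def CoxeterSystem.sgnTwist {B W : Type*} [Group W] {M : CoxeterMatrix B}
    (cs : CoxeterSystem M W) (χ : W → ℂ) : W → ℂ :=
  fun w => (-1 : ℂ) ^ cs.length w * χ w

/-- `M ↑ E`, for `M ∈ Irr(W_K)` with character `ψ` and `E` with character `χ`:
by Frobenius reciprocity, `E` is a constituent of the induction of `M` iff the inner
product `⟨ψ, χ|_{W_K}⟩` is nonzero. -/
def CoxeterSystem.Constituent {B W : Type*} [Group W] [Fintype W] {M : CoxeterMatrix B}
    (cs : CoxeterSystem M W) (K : Set B) (ψ χ : W → ℂ) : Prop :=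
  ∑ w : W, (if w ∈ cs.parabolic K then ψ w * χ w⁻¹ else 0) ≠ 0

/-- `g = ω_L(χ)` for a character `χ` of the parabolic subgroup `W_I`: there is a set `R ⊆ I`
of representatives of the `W_I`-conjugacy classes of the simple reflections `s_i`, `i ∈ I`,
and integers `z j = N_{s_j} · χ(s_j) / χ(1)` (where `N_{s_j}` is the size of the
`W_I`-conjugacy class of `s_j`), such that `g = ∑_{j ∈ R} z j • L(s_j)`. -/
def CoxeterSystem.IsOmega {B W : Type*} [Group W] [Fintype W] {M : CoxeterMatrix B}
    (cs : CoxeterSystem M W) {Γ : Type*} [AddCommGroup Γ] (c : B → Γ)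
    (I : Set B) (χ : W → ℂ) (g : Γ) : Prop :=
  ∃ (R : Finset B) (z : B → ℤ),
    (↑R : Set B) ⊆ I ∧
    (∀ i ∈ I, ∃! j, j ∈ R ∧ ∃ x ∈ cs.parabolic I, x * cs.simple i * x⁻¹ = cs.simple j) ∧
    (∀ j ∈ R, (z j : ℂ) * χ 1 =
      (Nat.card {x : W // ∃ y ∈ cs.parabolic I, y * cs.simple j * y⁻¹ = x} : ℂ) *
        χ (cs.simple j)) ∧
    g = ∑ j ∈ R, z j • c j

open Finset

lemma LinearMap.exists_int_trace_eq_of_mul_self_eq_one {K V : Type*} [Field K] [NeZero (2 : K)]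
    [AddCommGroup V] [Module K V] [FiniteDimensional K V] {p : Module.End K V}
    (hp : p * p = 1) : ∃ z : ℤ, LinearMap.trace K V p = z := by
  -- `(1 + p) / 2` is the projection onto the `+1`-eigenspace of `p`.
  set q : Module.End K V := (2⁻¹ : K) • (1 + p) with hq
  have hqq : IsIdempotentElem q := by
    have h2 : (2⁻¹ : K) * 2⁻¹ * 2 = 2⁻¹ := by field_simp
    have hsq : (1 + p) * (1 + p) = (2 : K) • (1 + p) := by
      rw [two_smul, mul_add, add_mul, add_mul, hp, one_mul, mul_one, one_mul]; abel
    rw [IsIdempotentElem, hq, smul_mul_smul, hsq, smul_smul, h2]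
  have htrq : LinearMap.trace K V q = 2⁻¹ * (Module.finrank K V + LinearMap.trace K V p) := by
    rw [hq, map_smul, map_add, LinearMap.trace_one, smul_eq_mul]
  refine ⟨2 * Module.finrank K (LinearMap.range q) - Module.finrank K V, ?_⟩
  rw [(LinearMap.IsIdempotentElem.isProj_range q hqq).trace] at htrq
  push_cast
  have h2 : (2 : K)⁻¹ * 2 = 1 := inv_mul_cancel₀ two_ne_zero
  linear_combination (-2 : K) * htrq - (Module.finrank K V + LinearMap.trace K V p) * h2

section Schur

variable {G V : Type*} [Group G] [AddCommGroup V] [Module ℂ V] [FiniteDimensional ℂ V]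
  {ρ : Representation ℂ G V}

lemma IrreducibleRep.exists_eq_smul_one_of_commute (hρ : IrreducibleRep ρ)
    {T : Module.End ℂ V} (hT : ∀ g, ρ g * T = T * ρ g) : ∃ μ : ℂ, T = μ • 1 := by
  obtain ⟨v, hv⟩ := hρ.1
  have : Nontrivial V := nontrivial_of_ne v 0 hv
  obtain ⟨μ, hμ⟩ := Module.End.exists_eigenvalue T
  have hinv : ∀ g, ∀ w ∈ T.eigenspace μ, ρ g w ∈ T.eigenspace μ := by
    intro g w hw
    rw [Module.End.mem_eigenspace_iff] at hw ⊢
    rw [← Module.End.mul_apply, ← hT g, Module.End.mul_apply, hw, map_smul]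
  refine ⟨μ, LinearMap.ext fun w => ?_⟩
  have htop : T.eigenspace μ = ⊤ := (hρ.2 _ hinv).resolve_left hμ
  exact Module.End.mem_eigenspace_iff.mp (htop ▸ Submodule.mem_top)

end Schur

lemma isIntegral_of_mulVec_eq_smul {R K n : Type*} [CommRing R] [Field K] [Algebra R K]
    [Fintype n] [DecidableEq n] (A : Matrix n n R) {f : n → K} (hf : f ≠ 0) {μ : K}
    (h : (A.map (algebraMap R K)).mulVec f = μ • f) : IsIntegral R μ := by
  refine ⟨A.charpoly, A.charpoly_monic, ?_⟩
  have hμ : Module.End.HasEigenvalue (Matrix.toLin' (A.map (algebraMap R K))) μ :=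
    Module.End.hasEigenvalue_of_hasEigenvector
      ⟨Module.End.mem_eigenspace_iff.mpr (by rwa [Matrix.toLin'_apply]), hf⟩
  rw [Module.End.hasEigenvalue_iff_isRoot_charpoly, Matrix.charpoly_toLin',
    Matrix.charpoly_map] at hμ
  rwa [Polynomial.IsRoot, Polynomial.eval_map] at hμ

lemma exists_int_eq_of_isIntegral_of_mul_eq {K : Type*} [Field K] [CharZero K] {μ : K}
    (hμ : IsIntegral ℤ μ) {n m : ℤ} (hn : n ≠ 0) (h : μ * n = m) : ∃ z : ℤ, μ = z := by
  have hμq : algebraMap ℚ K (m / n) = μ := by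
    rw [map_div₀, map_intCast, map_intCast, ← h, mul_div_cancel_right₀ _ (Int.cast_ne_zero.mpr hn)]
  have hq : IsIntegral ℤ ((m : ℚ) / n) := by
    rwa [← isIntegral_algebraMap_iff (algebraMap ℚ K).injective, hμq]
  obtain ⟨z, hz⟩ := IsIntegrallyClosed.isIntegral_iff.mp hq
  refine ⟨z, ?_⟩
  rw [← hμq, ← hz, eq_intCast, map_intCast]

namespace Representation

variable {G V : Type*} [Group G] [AddCommGroup V] [Module ℂ V] (ρ : Representation ℂ G V)

lemma trace_eq_of_isConj [FiniteDimensional ℂ V] {s x : G} (h : IsConj s x) :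
    LinearMap.trace ℂ V (ρ x) = LinearMap.trace ℂ V (ρ s) := by
  obtain ⟨u, rfl⟩ := isConj_iff.mp h
  rw [map_mul ρ, map_mul ρ, LinearMap.trace_mul_comm, ← mul_assoc, ← map_mul ρ, inv_mul_cancel,
    map_one, one_mul]

variable [Fintype G]

noncomputable def conjClassSum (s : G) : Module.End ℂ V :=
  ∑ x ∈ univ.filter (IsConj s), ρ x

lemma commute_conjClassSum (s g : G) : ρ g * ρ.conjClassSum s = ρ.conjClassSum s * ρ g := by
  simp only [conjClassSum, Finset.mul_sum, Finset.sum_mul, ← map_mul]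
  refine Finset.sum_nbij' (fun x => g * x * g⁻¹) (fun y => g⁻¹ * y * g) ?_ ?_ ?_ ?_ ?_
  · intro x hx
    simp only [mem_filter, mem_univ, true_and] at hx ⊢
    exact hx.trans (isConj_iff.mpr ⟨g, rfl⟩)
  · intro y hy
    simp only [mem_filter, mem_univ, true_and] at hy ⊢
    exact hy.trans (isConj_iff.mpr ⟨g⁻¹, by group⟩)
  all_goals intros; simp only [mul_assoc, mul_inv_cancel_left, inv_mul_cancel_left,
    mul_inv_cancel, inv_mul_cancel, mul_one]

lemma trace_conjClassSum [FiniteDimensional ℂ V] (s : G) :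
    LinearMap.trace ℂ V (ρ.conjClassSum s) =
      #(univ.filter (IsConj s)) * LinearMap.trace ℂ V (ρ s) := by
  rw [conjClassSum, map_sum, Finset.sum_congr rfl fun x hx => ρ.trace_eq_of_isConj
    (Finset.mem_filter.mp hx).2, Finset.sum_const, nsmul_eq_mul]

lemma isIntegral_of_conjClassSum_eq_smul [FiniteDimensional ℂ V] (hV : ∃ v : V, v ≠ 0)
    {s : G} {μ : ℂ} (h : ρ.conjClassSum s = μ • 1) : IsIntegral ℤ μ := by
  obtain ⟨v, hv⟩ := hV
  obtain ⟨φ, hφ⟩ := Module.Projective.exists_dual_ne_zero ℂ hv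
  -- `μ` is an eigenvalue of the matrix of multiplication by the class sum in `ℤ[G]`, with
  -- the matrix coefficient `f` as eigenvector.
  let A : Matrix G G ℤ := Matrix.of fun g h => if IsConj s (h * g⁻¹) then 1 else 0
  let f : G → ℂ := fun g => φ (ρ g v)
  refine isIntegral_of_mulVec_eq_smul A (f := f) (fun hf => hφ ?_) ?_
  · simpa [f] using congrFun hf 1
  · funext g
    have hT := congrArg (fun T : Module.End ℂ V => φ (T (ρ g v))) h
    simp only [conjClassSum, LinearMap.sum_apply, map_sum, ← Module.End.mul_apply, ← map_mul,
      LinearMap.smul_apply, one_mul, map_smul] at hT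
    rw [Pi.smul_apply, show f g = φ (ρ g v) from rfl, ← hT, Finset.sum_filter]
    simp only [Matrix.mulVec, dotProduct, A, f, Matrix.map_apply, Matrix.of_apply]
    refine (Fintype.sum_equiv (Equiv.mulRight g) _ _ fun x => ?_).symm
    simp only [Equiv.coe_mulRight, mul_inv_cancel_right]
    split_ifs <;> simp

end Representation

theorem IrreducibleRep.exists_int_mul_trace_one_eq_card_mul_trace {G V : Type*} [Group G]
    [Fintype G] [AddCommGroup V] [Module ℂ V] [FiniteDimensional ℂ V]
    {ρ : Representation ℂ G V} (hρ : IrreducibleRep ρ) {s : G} (hs : s * s = 1) :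
    ∃ z : ℤ, z * LinearMap.trace ℂ V (ρ 1) =
      #(univ.filter (IsConj s)) * LinearMap.trace ℂ V (ρ s) := by
  obtain ⟨μ, hμ⟩ := hρ.exists_eq_smul_one_of_commute (ρ.commute_conjClassSum s)
  obtain ⟨k, hk⟩ := LinearMap.exists_int_trace_eq_of_mul_self_eq_one (p := ρ s)
    (by rw [← map_mul, hs, map_one])
  have hdim : Module.finrank ℂ V ≠ 0 :=
    (Module.finrank_pos_iff_exists_ne_zero.mpr hρ.1).ne'
  have htr : μ * Module.finrank ℂ V = #(univ.filter (IsConj s)) * k := by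
    rw [← hk, ← ρ.trace_conjClassSum, hμ, map_smul, LinearMap.trace_one, smul_eq_mul]
  obtain ⟨z, rfl⟩ := exists_int_eq_of_isIntegral_of_mul_eq
    (ρ.isIntegral_of_conjClassSum_eq_smul hρ.1 hμ) (n := Module.finrank ℂ V)
    (m := #(univ.filter (IsConj s)) * k) (by exact_mod_cast hdim) (by push_cast; exact htr)
  exact ⟨z, by rw [map_one, LinearMap.trace_one, hk, htr]⟩

section IrreducibleRep

variable {G V : Type*} [Group G] [AddCommGroup V] [Module ℂ V]

lemma irreducibleRep_of_finrank_eq_one (ρ : Representation ℂ G V)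
    (h : Module.finrank ℂ V = 1) : IrreducibleRep ρ :=
  have : Nontrivial V := Module.nontrivial_of_finrank_eq_succ h
  have : IsSimpleOrder (Submodule ℂ V) := is_simple_module_of_finrank_eq_one h
  ⟨exists_ne 0, fun U _ => eq_bot_or_eq_top U⟩

lemma IrreducibleRep.comp {H : Type*} [Group H] {ρ : Representation ℂ H V}
    (hρ : IrreducibleRep ρ) {f : G →* H} (hf : Function.Surjective f) :
    IrreducibleRep (ρ.comp f) := by
  refine ⟨hρ.1, fun U hU => hρ.2 U fun h v hv => ?_⟩
  obtain ⟨g, rfl⟩ := hf h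
  exact hU g v hv

def Representation.twist (ε : G →* ℂ) (ρ : Representation ℂ G V) : Representation ℂ G V where
  toFun g := ε g • ρ g
  map_one' := by rw [map_one, map_one, one_smul]
  map_mul' g h := by rw [map_mul, map_mul, smul_mul_smul_comm]

lemma IrreducibleRep.twist {ρ : Representation ℂ G V} (hρ : IrreducibleRep ρ) (ε : G →* ℂ) :
    IrreducibleRep (ρ.twist ε) := by
  refine ⟨hρ.1, fun U hU => hρ.2 U fun g v hv => ?_⟩
  have hε : ε g⁻¹ * ε g = 1 := by rw [← map_mul, inv_mul_cancel, map_one]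
  have hεv : ε g • ρ g v ∈ U := hU g v hv
  simpa only [smul_smul, hε, one_smul] using U.smul_mem (ε g⁻¹) hεv

end IrreducibleRep

namespace CoxeterSystem

variable {B W : Type*} [Group W] {M : CoxeterMatrix B} (cs : CoxeterSystem M W)

lemma parabolic_univ : cs.parabolic Set.univ = ⊤ := by
  rw [parabolic, Set.image_univ, cs.subgroup_closure_range_simple]

lemma parabolic_empty : cs.parabolic ∅ = ⊥ := by
  rw [parabolic, Set.image_empty, Subgroup.closure_empty]

lemma exists_mem_parabolic_univ_conj_eq_iff {a b : W} :
    (∃ y ∈ cs.parabolic Set.univ, y * a * y⁻¹ = b) ↔ IsConj a b := by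
  simp [cs.parabolic_univ, isConj_iff]

noncomputable def sign : W →* ℂ where
  toFun w := (-1) ^ cs.length w
  map_one' := by rw [cs.length_one, pow_zero]
  map_mul' v w := by
    rw [← pow_add, neg_one_pow_eq_pow_mod_two, cs.length_mul_mod_two,
      ← neg_one_pow_eq_pow_mod_two]

lemma isIrrCharOf_univ_iff {χ : W → ℂ} :
    cs.IsIrrCharOf Set.univ χ ↔ ∃ (n : ℕ) (ρ : Representation ℂ W (Fin n → ℂ)),
      IrreducibleRep ρ ∧ ∀ w, χ w = LinearMap.trace ℂ (Fin n → ℂ) (ρ w) := by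
  let e : cs.parabolic Set.univ ≃* W :=
    (MulEquiv.subgroupCongr cs.parabolic_univ).trans Subgroup.topEquiv
  have hmem : ∀ w, w ∈ cs.parabolic Set.univ := fun w => cs.parabolic_univ ▸ Subgroup.mem_top w
  constructor
  · rintro ⟨n, ρ, hρ, hχ⟩
    refine ⟨n, ρ.comp e.symm.toMonoidHom, hρ.comp e.symm.surjective, fun w => ?_⟩
    rw [hχ, dif_pos (hmem w)]
    rfl
  · rintro ⟨n, ρ, hρ, hχ⟩
    refine ⟨n, ρ.comp e.toMonoidHom, hρ.comp e.surjective, fun w => ?_⟩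
    rw [hχ, dif_pos (hmem w)]
    rfl

lemma isIrrCharOf_univ_sgnTwist {χ : W → ℂ} (hχ : cs.IsIrrCharOf Set.univ χ) :
    cs.IsIrrCharOf Set.univ (cs.sgnTwist χ) := by
  obtain ⟨n, ρ, hρ, hχ⟩ := cs.isIrrCharOf_univ_iff.mp hχ
  refine cs.isIrrCharOf_univ_iff.mpr ⟨n, ρ.twist cs.sign, hρ.twist _, fun w => ?_⟩
  rw [sgnTwist, hχ]
  exact ((LinearMap.trace ℂ _).map_smul _ _).symm

lemma sgnTwist_sgnTwist (χ : W → ℂ) : cs.sgnTwist (cs.sgnTwist χ) = χ := by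
  funext w
  rw [sgnTwist, sgnTwist, ← mul_assoc, ← mul_pow, neg_one_mul, neg_neg, one_pow, one_mul]

lemma IsIrrCharOf.apply_one_ne_zero {cs : CoxeterSystem M W} {I : Set B} {χ : W → ℂ}
    (hχ : cs.IsIrrCharOf I χ) : χ 1 ≠ 0 := by
  obtain ⟨n, ρ, hρ, hχ⟩ := hχ
  rw [hχ, dif_pos (one_mem _)]
  change LinearMap.trace ℂ _ (ρ 1) ≠ 0
  rw [map_one, LinearMap.trace_one]
  exact_mod_cast (Module.finrank_pos_iff_exists_ne_zero.mpr hρ.1).ne'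

lemma isIrrCharOf_empty_indicator_one : cs.IsIrrCharOf ∅ (fun w => if w = 1 then 1 else 0) := by
  refine ⟨1, Representation.trivial ℂ _ _,
    irreducibleRep_of_finrank_eq_one _ (Module.finrank_fin_fun ℂ), fun w => ?_⟩
  dsimp only
  by_cases hw : w = 1
  · subst hw
    rw [if_pos rfl, dif_pos (one_mem _)]
    change (1 : ℂ) = LinearMap.trace ℂ (Fin 1 → ℂ) 1
    rw [LinearMap.trace_one, Module.finrank_fin_fun, Nat.cast_one]
  · rw [if_neg hw, dif_neg (by rwa [cs.parabolic_empty, Subgroup.mem_bot])]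

variable [Fintype W]

lemma constituent_empty_iff {ψ χ : W → ℂ} : cs.Constituent ∅ ψ χ ↔ ψ 1 * χ 1 ≠ 0 := by
  simp [Constituent, cs.parabolic_empty]

lemma exists_isIrrCharOf_empty_constituent {I : Set B} {χ : W → ℂ} (hχ : cs.IsIrrCharOf I χ) :
    ∃ ψ, cs.IsIrrCharOf ∅ ψ ∧ cs.Constituent ∅ ψ χ :=
  ⟨_, cs.isIrrCharOf_empty_indicator_one,
    cs.constituent_empty_iff.mpr (by simpa using hχ.apply_one_ne_zero)⟩

lemma exists_finset_existsUnique_isConj_simple [Nonempty B] :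
    ∃ R : Finset B, ∀ i, ∃! j, j ∈ R ∧ IsConj (cs.simple i) (cs.simple j) := by
  let f : B → ConjClasses W := fun i => ConjClasses.mk (cs.simple i)
  -- `r i` is a canonical representative of the class of `s i` among the simple reflections.
  let r : B → B := fun i => Function.invFun f (f i)
  have hr : ∀ i, f (r i) = f i := fun i => Function.invFun_eq ⟨i, rfl⟩
  have hfin : (Set.range r).Finite :=
    (Set.finite_range (Function.invFun f)).subset
      (Set.range_comp_subset_range f (Function.invFun f))
  refine ⟨hfin.toFinset, fun i => ⟨r i, ⟨hfin.mem_toFinset.mpr ⟨i, rfl⟩, ?_⟩, ?_⟩⟩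
  · exact ConjClasses.mk_eq_mk_iff_isConj.mp (hr i).symm
  · rintro j ⟨hj, hij⟩
    obtain ⟨i', rfl⟩ := hfin.mem_toFinset.mp hj
    have hfi : f i = f i' := (ConjClasses.mk_eq_mk_iff_isConj.mpr hij).trans (hr i')
    exact congrArg (Function.invFun f) hfi.symm

lemma natCard_conj_parabolic_univ (a : W) :
    Nat.card {x : W // ∃ y ∈ cs.parabolic Set.univ, y * a * y⁻¹ = x} =
      #(univ.filter (IsConj a)) := by
  simp_rw [cs.exists_mem_parabolic_univ_conj_eq_iff]
  rw [Nat.card_eq_fintype_card, Fintype.card_subtype]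

lemma exists_isOmega_univ [Nonempty B] {Γ : Type*} [AddCommGroup Γ] (c : B → Γ) {χ : W → ℂ}
    (hχ : cs.IsIrrCharOf Set.univ χ) : ∃ g, cs.IsOmega c Set.univ χ g := by
  obtain ⟨n, ρ, hρ, hχ⟩ := cs.isIrrCharOf_univ_iff.mp hχ
  have hz : ∀ j, ∃ z : ℤ, (z : ℂ) * χ 1 =
      Nat.card {x : W // ∃ y ∈ cs.parabolic Set.univ, y * cs.simple j * y⁻¹ = x} *
        χ (cs.simple j) := by
    intro j
    rw [cs.natCard_conj_parabolic_univ, hχ, hχ]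
    exact hρ.exists_int_mul_trace_one_eq_card_mul_trace (cs.simple_mul_simple_self j)
  choose z hz using hz
  obtain ⟨R, hR⟩ := cs.exists_finset_existsUnique_isConj_simple
  refine ⟨_, R, z, Set.subset_univ _, fun i _ => ?_, fun j _ => hz j, rfl⟩
  simpa only [cs.exists_mem_parabolic_univ_conj_eq_iff] using hR i

lemma IsOmega.sgnTwist {cs : CoxeterSystem M W} {Γ : Type*} [AddCommGroup Γ] {c : B → Γ}
    {I : Set B} {χ : W → ℂ} {g : Γ} (h : cs.IsOmega c I χ g) :
    cs.IsOmega c I (cs.sgnTwist χ) (-g) := by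
  obtain ⟨R, z, hRI, hR, hz, rfl⟩ := h
  refine ⟨R, -z, hRI, hR, fun j hj => ?_, ?_⟩
  · simp only [CoxeterSystem.sgnTwist, cs.length_one, cs.length_simple, pow_zero, pow_one,
      one_mul, Pi.neg_apply, Int.cast_neg]
    linear_combination -hz j hj
  · simp only [Pi.neg_apply, neg_smul, Finset.sum_neg_distrib]

end CoxeterSystem

section OrderedGroup

variable {Γ : Type*} [AddCommGroup Γ] [LinearOrder Γ] [IsOrderedAddMonoid Γ]

lemma ite_sub_le_eq_max (a b g : Γ) : (if b - a ≤ g then a else b - g) = max a (b - g) := by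
  split_ifs with h
  · exact (max_eq_left (sub_le_comm.mp h)).symm
  · exact (max_eq_right (lt_sub_comm.mpr (not_le.mp h)).le).symm

lemma max_add_sub_max_sub (a b g : Γ) : max b (a + g) - max a (b - g) = g := by
  rw [sub_eq_iff_eq_add', ← max_add_add_right, sub_add_cancel, max_comm]

end OrderedGroup

theorem atilde_properties_general {B W : Type*} [Group W] [Fintype W] [Nonempty B]
    {M : CoxeterMatrix B} (cs : CoxeterSystem M W)
    {Γ : Type*} [AddCommGroup Γ] [LinearOrder Γ] [IsOrderedAddMonoid Γ]
    (c : B → Γ)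
    (A A' : Set B → (W → ℂ) → Γ)
    (hbase : ∀ χ, cs.IsIrrCharOf ∅ χ → A ∅ χ = 0)
    (hA' : ∀ (I : Set B) (χ : W → ℂ), cs.IsIrrCharOf I χ → I ≠ ∅ →
      IsGreatest {g : Γ | ∃ K, K ⊂ I ∧ ∃ ψ, cs.IsIrrCharOf K ψ ∧ cs.Constituent K ψ χ ∧
        g = A K ψ} (A' I χ))
    (hrec : ∀ (I : Set B) (χ : W → ℂ), cs.IsIrrCharOf I χ → I ≠ ∅ →
      ∀ g : Γ, cs.IsOmega c I χ g →
        A I χ = if A' I (cs.sgnTwist χ) - A' I χ ≤ g then A' I χ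
          else A' I (cs.sgnTwist χ) - g)
    (E : W → ℂ) (hE : cs.IsIrrCharOf Set.univ E) :
    (A' Set.univ E ≤ A Set.univ E ∧ 0 ≤ A' Set.univ E) ∧
    (∀ g : Γ, cs.IsOmega c Set.univ E g →
      A Set.univ (cs.sgnTwist E) - A Set.univ E = g) ∧
    (∀ K : Set B, K ⊂ Set.univ → ∀ ψ : W → ℂ, cs.IsIrrCharOf K ψ →
      cs.Constituent K ψ E → A K ψ ≤ A Set.univ E) := by
  have huniv : (Set.univ : Set B) ≠ ∅ := Set.univ_nonempty.ne_empty
  set a := A' Set.univ E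
  set b := A' Set.univ (cs.sgnTwist E)
  have hmax : ∀ g, cs.IsOmega c Set.univ E g →
      A Set.univ E = max a (b - g) ∧ A Set.univ (cs.sgnTwist E) = max b (a + g) := by
    intro g hg
    have hE' := hrec _ _ (cs.isIrrCharOf_univ_sgnTwist hE) huniv _ hg.sgnTwist
    rw [cs.sgnTwist_sgnTwist, ite_sub_le_eq_max, sub_neg_eq_add] at hE'
    exact ⟨(hrec _ _ hE huniv g hg).trans (ite_sub_le_eq_max a b g), hE'⟩
  obtain ⟨g₀, hg₀⟩ := cs.exists_isOmega_univ c hE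
  have ha_le : a ≤ A Set.univ E := (hmax g₀ hg₀).1 ▸ le_max_left _ _
  have ha_greatest := hA' Set.univ E hE huniv
  obtain ⟨ψ₀, hψ₀, hψ₀E⟩ := cs.exists_isIrrCharOf_empty_constituent hE
  refine ⟨⟨ha_le, ha_greatest.2 ⟨∅, Set.empty_ssubset.mpr Set.univ_nonempty, ψ₀, hψ₀, hψ₀E,
    (hbase ψ₀ hψ₀).symm⟩⟩, fun g hg => ?_, fun K hK ψ hψ hψE => ?_⟩
  · rw [(hmax g hg).1, (hmax g hg).2, max_add_sub_max_sub]
  · exact (ha_greatest.2 ⟨K, hK, ψ, hψ, hψE, rfl⟩).trans ha_le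

/-- Let `(W,S)` be a finite Coxeter system, `Γ` a totally ordered abelian
group and `L` a weight function with values `c i = L(s_i) ≥ 0`.  Let `ã = A` (with auxiliary
function `ã' = A'`) be the function on irreducible characters of the parabolic subgroups of
`W` defined recursively as in Definition 2 of the paper:
`A ∅ = 0`; for `I ≠ ∅`, `A' I χ` is the maximum of the values `A K ψ` over all proper
`K ⊊ I` and all `ψ ∈ Irr(W_K)` with `ψ ↑ χ`; and
`A I χ = A' I χ` if `A' I (χ ⊗ sgn) − A' I χ ≤ ω_L(χ)`, and
`A I χ = A' I (χ ⊗ sgn) − ω_L(χ)` otherwise.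
Then for every `E ∈ Irr(W)`:
(i) `ã_E ≥ ã'_E ≥ 0`; (ii) `ã_{E ⊗ sgn} − ã_E = ω_L(E)`; and (iii) `ã_E ≥ ã_M` whenever
`J ⊊ S`, `M ∈ Irr(W_J)` and `M ↑ E`. -/
theorem atilde_properties {B W : Type*} [Group W] [Fintype W] [Nonempty B]
    {M : CoxeterMatrix B} (cs : CoxeterSystem M W)
    {Γ : Type*} [AddCommGroup Γ] [LinearOrder Γ] [IsOrderedAddMonoid Γ]
    (c : B → Γ) (hc0 : ∀ i, 0 ≤ c i)
    (hcconj : ∀ i j : B, IsConj (cs.simple i) (cs.simple j) → c i = c j)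
    (A A' : Set B → (W → ℂ) → Γ)
    (hbase : ∀ χ, cs.IsIrrCharOf ∅ χ → A ∅ χ = 0)
    (hA' : ∀ (I : Set B) (χ : W → ℂ), cs.IsIrrCharOf I χ → I ≠ ∅ →
      IsGreatest {g : Γ | ∃ K, K ⊂ I ∧ ∃ ψ, cs.IsIrrCharOf K ψ ∧ cs.Constituent K ψ χ ∧
        g = A K ψ} (A' I χ))
    (hrec : ∀ (I : Set B) (χ : W → ℂ), cs.IsIrrCharOf I χ → I ≠ ∅ →
      ∀ g : Γ, cs.IsOmega c I χ g →
        A I χ = if A' I (cs.sgnTwist χ) - A' I χ ≤ g then A' I χ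
          else A' I (cs.sgnTwist χ) - g)
    (E : W → ℂ) (hE : cs.IsIrrCharOf Set.univ E) :
    (A' Set.univ E ≤ A Set.univ E ∧ 0 ≤ A' Set.univ E) ∧
    (∀ g : Γ, cs.IsOmega c Set.univ E g →
      A Set.univ (cs.sgnTwist E) - A Set.univ E = g) ∧
    (∀ K : Set B, K ⊂ Set.univ → ∀ ψ : W → ℂ, cs.IsIrrCharOf K ψ →
      cs.Constituent K ψ E → A K ψ ≤ A Set.univ E) :=
  atilde_properties_general cs c A A' hbase hA' hrec E hE
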